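/- arXiv:1107.5205 — 5 statements merged into one kernel-verified Lean document; each statement's English description precedes it below -/
import Mathlib

section
/- Let 𝒜 be a C*-subalgebra of the product ∏_n C_n of unital C*-algebras, with dense subset ℒ, and let 𝒢 be the ideal of sequences tending to zero in norm. If for each sequence (L_n) ∈ ℒ the sequence of norms (‖L_n‖) converges, then for every (A_n) ∈ 𝒜 and every strictly increasing η : ℕ → ℕ, the implication holds: if ‖A_{η(n)}‖ → 0 then ‖A_n‖ → 0. -/
open Filter Topology

/-- if `𝒜` is a C*-subalgebra of the product of unital C*-algebras `C n`
(consisting of bounded sequences) and `ℒ ⊆ 𝒜` is dense in `𝒜` (with respect to the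
supremum norm) such that the norm sequence of each element of `ℒ` converges, then for every
`A ∈ 𝒜` and every strictly increasing `η`: if `‖A (η n)‖ → 0` then `‖A n‖ → 0`. -/
theorem stmt5 {C : ℕ → Type*} [∀ n, NormedRing (C n)] [∀ n, StarRing (C n)]
    [∀ n, CStarRing (C n)]
    (𝒜 ℒ : Set (∀ n, C n))
    (hbdd : ∀ A ∈ 𝒜, ∃ M, ∀ n, ‖A n‖ ≤ M)
    (hsub : ∀ x ∈ 𝒜, ∀ y ∈ 𝒜, x - y ∈ 𝒜)
    (hmul : ∀ x ∈ 𝒜, ∀ y ∈ 𝒜, x * y ∈ 𝒜)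
    (hstar : ∀ x ∈ 𝒜, star x ∈ 𝒜)
    (hL𝒜 : ℒ ⊆ 𝒜)
    (hdense : ∀ A ∈ 𝒜, ∀ ε : ℝ, 0 < ε → ∃ L ∈ ℒ, ∀ n, ‖A n - L n‖ ≤ ε)
    (hconv : ∀ L ∈ ℒ, ∃ l, Tendsto (fun n => ‖L n‖) atTop (𝓝 l)) :
    ∀ A ∈ 𝒜, ∀ η : ℕ → ℕ, StrictMono η →
      Tendsto (fun n => ‖A (η n)‖) atTop (𝓝 0) →
      Tendsto (fun n => ‖A n‖) atTop (𝓝 0) := by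
  intro A hA η hη hsubseq
  rw [Metric.tendsto_atTop]
  intro ε hε
  obtain ⟨L, hL, hAL⟩ := hdense A hA (ε / 4) (by linarith)
  obtain ⟨l, hl⟩ := hconv L hL
  -- norm comparison: ‖L n‖ ≤ ‖A n‖ + ε/4 and ‖A n‖ ≤ ‖L n‖ + ε/4
  have key : ∀ n, |‖L n‖ - ‖A n‖| ≤ ε / 4 := by
    intro n
    calc |‖L n‖ - ‖A n‖| ≤ ‖L n - A n‖ := abs_norm_sub_norm_le _ _
      _ = ‖A n - L n‖ := norm_sub_rev _ _
      _ ≤ ε / 4 := hAL n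
  -- subsequence of L's norms tends to l
  have hsubL : Tendsto (fun n => ‖L (η n)‖) atTop (𝓝 l) :=
    hl.comp hη.tendsto_atTop
  -- l ≤ ε/4
  have hlle : l ≤ ε / 4 := by
    have hdiff : Tendsto (fun n => ‖L (η n)‖ - ‖A (η n)‖) atTop (𝓝 (l - 0)) :=
      hsubL.sub hsubseq
    rw [sub_zero] at hdiff
    refine le_of_tendsto hdiff (Eventually.of_forall fun n => ?_)
    have := key (η n)
    rw [abs_le] at this
    linarith [this.2]
  -- eventually ‖L n‖ < l + ε/4
  have hev : ∀ᶠ n in atTop, ‖L n‖ < l + ε / 4 := by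
    have : l < l + ε / 4 := by linarith
    exact hl.eventually (eventually_lt_nhds this)
  rw [eventually_atTop] at hev
  obtain ⟨N, hN⟩ := hev
  refine ⟨N, fun n hn => ?_⟩
  have h1 := hN n hn
  have h2 := key n
  rw [abs_le] at h2
  have hA0 : 0 ≤ ‖A n‖ := norm_nonneg _
  rw [Real.dist_eq, sub_zero, abs_of_nonneg hA0]
  linarith [h2.1]
end

section
/- Let 𝒜 be a separable C*-subalgebra of the product ∏_n C_n of unital C*-algebras. Then there exists a strictly increasing η : ℕ → ℕ such that for every (A_n) ∈ 𝒜, the sequence of norms (‖A_{η(n)}‖) converges. -/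
open Filter Topology

/-- if `𝒜` is a separable C*-subalgebra of the product of unital C*-algebras
`C n` (consisting of bounded sequences, with the supremum norm), then there is a strictly
increasing `η : ℕ → ℕ` such that for every `A ∈ 𝒜` the sequence of norms `(‖A (η n)‖)`
converges. -/
theorem stmt6 {C : ℕ → Type*} [∀ n, NormedRing (C n)] [∀ n, StarRing (C n)]
    [∀ n, CStarRing (C n)]
    (𝒜 : Set (∀ n, C n))
    (hbdd : ∀ A ∈ 𝒜, ∃ M, ∀ n, ‖A n‖ ≤ M)
    (hsub : ∀ x ∈ 𝒜, ∀ y ∈ 𝒜, x - y ∈ 𝒜)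
    (hmul : ∀ x ∈ 𝒜, ∀ y ∈ 𝒜, x * y ∈ 𝒜)
    (hstar : ∀ x ∈ 𝒜, star x ∈ 𝒜)
    (hsep : ∃ D : Set (∀ n, C n), D.Countable ∧ D ⊆ 𝒜 ∧
      ∀ A ∈ 𝒜, ∀ ε : ℝ, 0 < ε → ∃ L ∈ D, ∀ n, ‖A n - L n‖ ≤ ε) :
    ∃ η : ℕ → ℕ, StrictMono η ∧
      ∀ A ∈ 𝒜, ∃ l, Tendsto (fun n => ‖A (η n)‖) atTop (𝓝 l) := by
  obtain ⟨D, hDc, hDA, hdense⟩ := hsep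
  rcases Set.eq_empty_or_nonempty 𝒜 with h𝒜 | ⟨A₀, hA₀⟩
  · exact ⟨id, strictMono_id, fun A hA => by simp [h𝒜] at hA⟩
  -- D is nonempty
  have hDne : D.Nonempty := by
    obtain ⟨L, hL, -⟩ := hdense A₀ hA₀ 1 one_pos
    exact ⟨L, hL⟩
  obtain ⟨f, rfl⟩ := hDc.exists_eq_range hDne
  have hfA : ∀ k, f k ∈ 𝒜 := fun k => hDA ⟨k, rfl⟩
  -- bounds
  choose M hM using fun k => hbdd (f k) (hfA k)
  -- compactness diagonal argument in the product ∀ k, ℝ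
  set x : ℕ → (ℕ → ℝ) := fun n k => ‖f k n‖ with hx
  have hS : IsCompact (Set.pi Set.univ fun k => Set.Icc (0:ℝ) (M k)) :=
    isCompact_univ_pi fun k => isCompact_Icc
  have hxS : ∀ n, x n ∈ Set.pi Set.univ fun k => Set.Icc (0:ℝ) (M k) :=
    fun n k _ => ⟨norm_nonneg _, hM k n⟩
  obtain ⟨a, -, φ, hφ, ht⟩ := hS.tendsto_subseq hxS
  have hk : ∀ k, Tendsto (fun n => ‖f k (φ n)‖) atTop (𝓝 (a k)) := by
    intro k
    exact (tendsto_pi_nhds.mp ht) k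
  refine ⟨φ, hφ, fun A hA => ?_⟩
  have hC : CauchySeq (fun n => ‖A (φ n)‖) := by
    rw [Metric.cauchySeq_iff]
    intro ε hε
    obtain ⟨L, hLD, hLA⟩ := hdense A hA (ε/4) (by positivity)
    obtain ⟨k, rfl⟩ := hLD
    have hck : CauchySeq fun n => ‖f k (φ n)‖ := (hk k).cauchySeq
    rw [Metric.cauchySeq_iff] at hck
    obtain ⟨N, hN⟩ := hck (ε/4) (by positivity)
    refine ⟨N, fun m hm n hn => ?_⟩
    have h1 : ∀ j, dist ‖A j‖ ‖f k j‖ ≤ ε/4 := fun j => by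
      rw [Real.dist_eq]
      exact (abs_norm_sub_norm_le _ _).trans (hLA j)
    calc dist ‖A (φ m)‖ ‖A (φ n)‖
        ≤ dist ‖A (φ m)‖ ‖f k (φ m)‖ + dist ‖f k (φ m)‖ ‖f k (φ n)‖
          + dist ‖f k (φ n)‖ ‖A (φ n)‖ := dist_triangle4 _ _ _ _
      _ < ε/4 + ε/4 + ε/4 := by
          have := hN m hm n hn
          have h2 := h1 (φ m)
          have h3 := h1 (φ n)
          rw [dist_comm ‖f k (φ n)‖] at *
          linarith [h1 (φ n)]
      _ < ε := by linarith
  exact cauchySeq_tendsto_of_complete hC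
end

section
/- Let ℱ be the algebra of bounded sequences (A_n) of matrices A_n ∈ ℂ^{δ(n)×δ(n)}. A sequence (K_n) ∈ ℱ satisfies lim_{k→∞} sup_{n≥k} Σ_k(K_n) = 0 if and only if lim_{k→∞} limsup_{n→∞} Σ_k(K_n) = 0. -/
/-!
Since `k ↦ Σ_k(K_n)` is antitone, a single index `k₀` with `limsup_n Σ_{k₀}(K_n) < ε` already
gives `Σ_k(K_n) < ε` for all `k ≥ k₀` and all large `n`; so the suprema over `n ≥ k` eventually
drop below `ε`. Conversely each limsup is bounded by the corresponding tail supremum. Boundedness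
of `(K_n)` keeps all these suprema and limsups finite.
-/

open Filter Topology

/-- The (L²) operator norm of a complex square matrix. -/
noncomputable def opNorm {n : ℕ} (A : Matrix (Fin n) (Fin n) ℂ) : ℝ :=
  ‖Matrix.toEuclideanCLM (𝕜 := ℂ) A‖

/-- The increasingly sorted list of singular values of `A`
(square roots of the eigenvalues of `Aᴴ * A`). -/
noncomputable def svList {n : ℕ} (A : Matrix (Fin n) (Fin n) ℂ) : List ℝ :=
  (Finset.univ.val.map fun i =>
    Real.sqrt ((Matrix.isHermitian_conjTranspose_mul_self A).eigenvalues i)).sort (· ≤ ·)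

/-- `sigLower A k` is the `k`-th smallest singular value of `A` (1-indexed, `σ_k`);
`0` if `k` is out of range. -/
noncomputable def sigLower {n : ℕ} (A : Matrix (Fin n) (Fin n) ℂ) (k : ℕ) : ℝ :=
  (svList A).getD (k - 1) 0

/-- `sigUpper A k` is the `k`-th largest singular value of `A` (1-indexed, `Σ_k`);
`0` if `k` is out of range (in particular for `k > n`). -/
noncomputable def sigUpper {n : ℕ} (A : Matrix (Fin n) (Fin n) ℂ) (k : ℕ) : ℝ :=
  if 1 ≤ k ∧ k ≤ n then (svList A).getD (n - k) 0 else 0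

/-- `eigCount hA U` is the number of eigenvalues (with multiplicity) of the
hermitian matrix `A` lying in `U ⊆ ℝ`. -/
noncomputable def eigCount {n : ℕ} {A : Matrix (Fin n) (Fin n) ℂ}
    (hA : A.IsHermitian) (U : Set ℝ) : ℕ :=
  Nat.card {i : Fin n // hA.eigenvalues i ∈ U}

section SingularValues

open Matrix

variable {n : ℕ} (A : Matrix (Fin n) (Fin n) ℂ)

lemma opNorm_nonneg : 0 ≤ opNorm A := norm_nonneg _

lemma norm_toEuclideanCLM_conjTranspose_mul_self :
    ‖toEuclideanCLM (𝕜 := ℂ) (Aᴴ * A)‖ = opNorm A ^ 2 := by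
  rw [← star_eq_conjTranspose, map_mul, map_star, ContinuousLinearMap.star_eq_adjoint, opNorm, sq]
  exact ContinuousLinearMap.norm_adjoint_comp_self _

lemma eigenvalues_conjTranspose_mul_self_le_opNorm_sq (i : Fin n) :
    (isHermitian_conjTranspose_mul_self A).eigenvalues i ≤ opNorm A ^ 2 := by
  set T := toEuclideanCLM (𝕜 := ℂ) (Aᴴ * A)
  have hspec : ((isHermitian_conjTranspose_mul_self A).eigenvalues i : ℂ) ∈ spectrum ℂ T := by
    rw [AlgEquiv.spectrum_eq]
    exact spectrum.algebraMap_mem ℂ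
      ((isHermitian_conjTranspose_mul_self A).eigenvalues_mem_spectrum_real i)
  calc (isHermitian_conjTranspose_mul_self A).eigenvalues i
      ≤ ‖((isHermitian_conjTranspose_mul_self A).eigenvalues i : ℂ)‖ := by
        rw [Complex.norm_real]; exact le_abs_self _
    _ ≤ ‖T‖ * ‖(1 : EuclideanSpace ℂ (Fin n) →L[ℂ] EuclideanSpace ℂ (Fin n))‖ :=
        spectrum.norm_le_norm_mul_of_mem hspec
    _ ≤ ‖T‖ := mul_le_of_le_one_right (norm_nonneg _) ContinuousLinearMap.norm_id_le
    _ = opNorm A ^ 2 := norm_toEuclideanCLM_conjTranspose_mul_self A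

lemma mem_Icc_of_mem_svList {x : ℝ} (hx : x ∈ svList A) : x ∈ Set.Icc 0 (opNorm A) := by
  rw [svList, Multiset.mem_sort, Multiset.mem_map] at hx
  obtain ⟨i, -, rfl⟩ := hx
  refine ⟨Real.sqrt_nonneg _, Real.sqrt_le_iff.2 ⟨opNorm_nonneg A, ?_⟩⟩
  exact eigenvalues_conjTranspose_mul_self_le_opNorm_sq A i

lemma length_svList : (svList A).length = n := by
  simp [svList]

lemma getD_svList_mem_Icc (j : ℕ) : (svList A).getD j 0 ∈ Set.Icc 0 (opNorm A) := by
  rcases lt_or_ge j (svList A).length with h | h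
  · rw [List.getD_eq_getElem _ _ h]
    exact mem_Icc_of_mem_svList A (List.getElem_mem h)
  · rw [List.getD_eq_default _ _ h]
    exact ⟨le_rfl, opNorm_nonneg A⟩

lemma sigUpper_mem_Icc (k : ℕ) : sigUpper A k ∈ Set.Icc 0 (opNorm A) := by
  unfold sigUpper
  split
  · exact getD_svList_mem_Icc A _
  · exact ⟨le_rfl, opNorm_nonneg A⟩

lemma sigUpper_antitoneOn : AntitoneOn (sigUpper A) (Set.Ici 1) := by
  intro k (hk : 1 ≤ k) k' (hk' : 1 ≤ k') hkk'
  by_cases hk'n : k' ≤ n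
  · have hlen := length_svList A
    have hi : n - k' < (svList A).length := by omega
    have hi' : n - k < (svList A).length := by omega
    rw [sigUpper, sigUpper, if_pos ⟨hk', hk'n⟩, if_pos ⟨hk, hkk'.trans hk'n⟩,
      List.getD_eq_getElem _ _ hi, List.getD_eq_getElem _ _ hi']
    have hsorted : (svList A).Pairwise (· ≤ ·) := Multiset.pairwise_sort _ _
    exact hsorted.rel_get_of_le (a := ⟨n - k', hi⟩) (b := ⟨n - k, hi'⟩)
      (by simp only [Fin.mk_le_mk]; omega)
  · rw [sigUpper, if_neg (by omega)]
    exact (sigUpper_mem_Icc A k).1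

end SingularValues

section TailSupremum

variable {u : ℕ → ℝ} {m M : ℝ}

lemma limsup_nonneg_of_bounded (h0 : ∀ n, 0 ≤ u n) (hM : ∀ n, u n ≤ M) :
    0 ≤ limsup u atTop :=
  le_limsup_of_frequently_le (Frequently.of_forall h0) (isBoundedUnder_of ⟨M, hM⟩)

lemma limsup_le_iSup_ge (hm : ∀ n, m ≤ u n) (hM : ∀ n, u n ≤ M) (k : ℕ) :
    limsup u atTop ≤ ⨆ n : {n : ℕ // k ≤ n}, u n.1 := by
  refine limsup_le_of_le (isCoboundedUnder_le_of_le atTop hm) ?_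
  filter_upwards [eventually_ge_atTop k] with n hn
  exact le_ciSup (f := fun n : {n : ℕ // k ≤ n} => u n.1)
    ⟨M, Set.forall_mem_range.2 fun n => hM n.1⟩ ⟨n, hn⟩

variable {a : ℕ → ℕ → ℝ}

lemma tendsto_iSup_ge_of_tendsto_limsup (h0 : ∀ n k, 0 ≤ a n k) (hM : ∀ n k, a n k ≤ M)
    (hanti : ∀ n, AntitoneOn (a n) (Set.Ici 1))
    (h : Tendsto (fun k => limsup (fun n => a n k) atTop) atTop (𝓝 0)) :
    Tendsto (fun k => ⨆ n : {n : ℕ // k ≤ n}, a n.1 k) atTop (𝓝 0) := by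
  refine tendsto_order.2 ⟨fun ε hε => Eventually.of_forall fun k =>
    hε.trans_le (Real.iSup_nonneg fun n => h0 _ _), fun ε hε => ?_⟩
  obtain ⟨k₀, hk₀, hlim⟩ : ∃ k₀, 1 ≤ k₀ ∧ limsup (fun n => a n k₀) atTop < ε / 2 :=
    ((eventually_ge_atTop 1).and ((tendsto_order.1 h).2 _ (half_pos hε))).exists
  obtain ⟨N, hN⟩ := eventually_atTop.1
    (eventually_lt_of_limsup_lt hlim (isBoundedUnder_of ⟨M, fun n => hM n k₀⟩))
  filter_upwards [eventually_ge_atTop (max k₀ N)] with k hk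
  have hrow : ∀ n : {n : ℕ // k ≤ n}, a n.1 k ≤ ε / 2 := fun n =>
    (hanti n.1 hk₀ (hk₀.trans (le_of_max_le_left hk)) (le_of_max_le_left hk)).trans
      (hN n.1 ((le_of_max_le_right hk).trans n.2)).le
  exact (Real.iSup_le hrow (half_pos hε).le).trans_lt (half_lt_self hε)

theorem tendsto_iSup_ge_iff_tendsto_limsup (h0 : ∀ n k, 0 ≤ a n k) (hM : ∀ n k, a n k ≤ M)
    (hanti : ∀ n, AntitoneOn (a n) (Set.Ici 1)) :
    Tendsto (fun k => ⨆ n : {n : ℕ // k ≤ n}, a n.1 k) atTop (𝓝 0) ↔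
      Tendsto (fun k => limsup (fun n => a n k) atTop) atTop (𝓝 0) :=
  ⟨fun h => tendsto_of_tendsto_of_tendsto_of_le_of_le tendsto_const_nhds h
      (fun k => limsup_nonneg_of_bounded (h0 · k) (hM · k))
      (fun k => limsup_le_iSup_ge (h0 · k) (hM · k) k),
    tendsto_iSup_ge_of_tendsto_limsup h0 hM hanti⟩

end TailSupremum

theorem stmt7_general (δ : ℕ → ℕ)
    (K : ∀ n, Matrix (Fin (δ n)) (Fin (δ n)) ℂ)
    (hK : ∃ M, ∀ n, opNorm (K n) ≤ M) :
    Tendsto (fun k => ⨆ n : {m : ℕ // k ≤ m}, sigUpper (K n.1) k) atTop (𝓝 0) ↔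
    Tendsto (fun k => limsup (fun n => sigUpper (K n) k) atTop) atTop (𝓝 0) := by
  obtain ⟨M, hM⟩ := hK
  exact tendsto_iSup_ge_iff_tendsto_limsup (fun n k => (sigUpper_mem_Icc (K n) k).1)
    (fun n k => (sigUpper_mem_Icc (K n) k).2.trans (hM n)) fun n => sigUpper_antitoneOn (K n)

/-- for a bounded sequence `(K_n)` of matrices `K_n ∈ ℂ^{δ(n)×δ(n)}` (with `δ`
strictly increasing), `lim_{k→∞} sup_{n≥k} Σ_k(K_n) = 0` iff
`lim_{k→∞} limsup_{n→∞} Σ_k(K_n) = 0`. -/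
theorem stmt7 (δ : ℕ → ℕ) (hδ : StrictMono δ)
    (K : ∀ n, Matrix (Fin (δ n)) (Fin (δ n)) ℂ)
    (hK : ∃ M, ∀ n, opNorm (K n) ≤ M) :
    Tendsto (fun k => ⨆ n : {m : ℕ // k ≤ m}, sigUpper (K n.1) k) atTop (𝓝 0) ↔
    Tendsto (fun k => limsup (fun n => sigUpper (K n) k) atTop) atTop (𝓝 0) :=
  stmt7_general δ K hK
end

section
/- Let 𝒥 ⊆ ℐ be closed ideals of ℱ = ∏_n C_n, and let 𝒜 be a 𝒥-fractal C*-subalgebra of ℱ such that (𝒜 ∩ ℐ)_η = 𝒜_η ∩ ℐ_η for every strictly increasing η. Then 𝒜 is ℐ-fractal, i.e., for every A ∈ 𝒜 and strictly increasing η, R_η(A) ∈ ℐ_η implies A ∈ ℐ. -/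
open Filter Topology

/-- The restriction map `R_η : (A_n) ↦ (A_{η(n)})`. -/
def restrictSeq {C : ℕ → Type*} (η : ℕ → ℕ) (A : ∀ n, C n) : ∀ n, C (η n) :=
  fun n => A (η n)

/-- if `𝒥 ⊆ ℐ` are closed ideals of the product `ℱ` of unital C*-algebras,
`𝒜` is a `𝒥`-fractal C*-subalgebra of `ℱ`, and `(𝒜 ∩ ℐ)_η = 𝒜_η ∩ ℐ_η` for every strictly
increasing `η`, then `𝒜` is `ℐ`-fractal. -/
theorem stmt13 {C : ℕ → Type*} [∀ n, NormedRing (C n)] [∀ n, StarRing (C n)]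
    [∀ n, CStarRing (C n)]
    (𝒜 𝒥 ℐ : Set (∀ n, C n))
    (hbdd : ∀ A ∈ 𝒜, ∃ M, ∀ n, ‖A n‖ ≤ M)
    (hsub : ∀ x ∈ 𝒜, ∀ y ∈ 𝒜, x - y ∈ 𝒜)
    (hmul : ∀ x ∈ 𝒜, ∀ y ∈ 𝒜, x * y ∈ 𝒜)
    (hstar : ∀ x ∈ 𝒜, star x ∈ 𝒜)
    (hJ0 : (0 : ∀ n, C n) ∈ 𝒥)
    (hJadd : ∀ x ∈ 𝒥, ∀ y ∈ 𝒥, x - y ∈ 𝒥)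
    (hJideal : ∀ j ∈ 𝒥, ∀ a : ∀ n, C n, a * j ∈ 𝒥 ∧ j * a ∈ 𝒥)
    (hJclosed : IsClosed 𝒥)
    (hI0 : (0 : ∀ n, C n) ∈ ℐ)
    (hIadd : ∀ x ∈ ℐ, ∀ y ∈ ℐ, x + y ∈ ℐ)
    (hIideal : ∀ j ∈ ℐ, ∀ a : ∀ n, C n, a * j ∈ ℐ ∧ j * a ∈ ℐ)
    (hIclosed : IsClosed ℐ)
    (hJI : 𝒥 ⊆ ℐ)
    (hJfrac : ∀ A ∈ 𝒜, ∀ η : ℕ → ℕ, StrictMono η →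
      restrictSeq η A ∈ restrictSeq η '' 𝒥 → A ∈ 𝒥)
    (hint : ∀ η : ℕ → ℕ, StrictMono η →
      restrictSeq η '' (𝒜 ∩ ℐ) = (restrictSeq η '' 𝒜) ∩ (restrictSeq η '' ℐ)) :
    ∀ A ∈ 𝒜, ∀ η : ℕ → ℕ, StrictMono η →
      restrictSeq η A ∈ restrictSeq η '' ℐ → A ∈ ℐ := by
  intro A hA η hη hI
  have hmem : restrictSeq η A ∈ restrictSeq η '' (𝒜 ∩ ℐ) := by
    rw [hint η hη]
    exact ⟨⟨A, hA, rfl⟩, hI⟩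
  obtain ⟨B, ⟨hBA, hBI⟩, hB⟩ := hmem
  have hAB : A - B ∈ 𝒥 := by
    apply hJfrac _ (hsub A hA B hBA) η hη
    refine ⟨0, hJ0, ?_⟩
    funext n
    show (0:C (η n)) = A (η n) - B (η n)
    exact (sub_eq_zero.mpr (congrFun hB n).symm).symm
  have : (A - B) + B ∈ ℐ := hIadd _ (hJI hAB) _ hBI
  simpa using this
end

section
/- Let 𝒜 be a C*-subalgebra of the algebra ℱ of bounded matrix sequences such that for every (A_n) ∈ 𝒜 and every k ∈ ℕ the sequence (Σ_k(A_n))_n converges. Then 𝒜 is essentially fractal: any sequence in 𝒜 having a compact subsequence is itself compact. -/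
open Filter Topology

/-- A matrix sequence is compact iff `lim_{k→∞} limsup_{n→∞} Σ_k(K_n) = 0`. -/
def IsCompactSeq (δ : ℕ → ℕ) (K : ∀ n, Matrix (Fin (δ n)) (Fin (δ n)) ℂ) : Prop :=
  Tendsto (fun k => limsup (fun n => sigUpper (K n) k) atTop) atTop (𝓝 0)

theorem Filter.Tendsto.limsup_comp_eq {α β γ : Type*} [ConditionallyCompleteLinearOrder α]
    [TopologicalSpace α] [OrderTopology α] {f : Filter β} [f.NeBot] {g : Filter γ} [g.NeBot]
    {u : β → α} {a : α} (hu : Tendsto u f (𝓝 a)) {φ : γ → β} (hφ : Tendsto φ g f) :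
    limsup (u ∘ φ) g = limsup u f := by
  rw [(hu.comp hφ).limsup_eq, hu.limsup_eq]

theorem stmt15_general (δ : ℕ → ℕ)
    (𝒜 : Set (∀ n, Matrix (Fin (δ n)) (Fin (δ n)) ℂ))
    (hconv : ∀ A ∈ 𝒜, ∀ k : ℕ, ∃ l, Tendsto (fun n => sigUpper (A n) k) atTop (𝓝 l)) :
    ∀ A ∈ 𝒜, ∀ η : ℕ → ℕ, StrictMono η →
      IsCompactSeq (δ ∘ η) (fun n => A (η n)) → IsCompactSeq δ A := by
  intro A hA η hη hcomp
  have limsup_subseq : ∀ k, limsup (fun n => sigUpper (A (η n)) k) atTop =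
      limsup (fun n => sigUpper (A n) k) atTop := fun k => by
    obtain ⟨l, hl⟩ := hconv A hA k
    exact hl.limsup_comp_eq hη.tendsto_atTop
  simpa only [IsCompactSeq, limsup_subseq] using hcomp

/-- if `𝒜` is a C*-subalgebra of the algebra of bounded matrix sequences such
that for each `(A_n) ∈ 𝒜` and each `k` the sequence `(Σ_k(A_n))_n` converges, then `𝒜` is
essentially fractal: every sequence in `𝒜` having a compact subsequence is compact. -/
theorem stmt15 (δ : ℕ → ℕ)
    (𝒜 : Set (∀ n, Matrix (Fin (δ n)) (Fin (δ n)) ℂ))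
    (hbdd : ∀ A ∈ 𝒜, ∃ M, ∀ n, opNorm (A n) ≤ M)
    (hsub : ∀ x ∈ 𝒜, ∀ y ∈ 𝒜, x - y ∈ 𝒜)
    (hmul : ∀ x ∈ 𝒜, ∀ y ∈ 𝒜, x * y ∈ 𝒜)
    (hstar : ∀ x ∈ 𝒜, (fun n => (x n).conjTranspose) ∈ 𝒜)
    (hconv : ∀ A ∈ 𝒜, ∀ k : ℕ, ∃ l, Tendsto (fun n => sigUpper (A n) k) atTop (𝓝 l)) :
    ∀ A ∈ 𝒜, ∀ η : ℕ → ℕ, StrictMono η →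
      IsCompactSeq (δ ∘ η) (fun n => A (η n)) → IsCompactSeq δ A :=
  stmt15_general δ 𝒜 hconv
end
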